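/- Let (Ω, F, P) support independent random variables U and θ, where U is uniformly distributed on [0,1] and P[θ = −1] = 1/2 = P[θ = 1]. Let F_0 = {∅, Ω}, F_1 = σ(U), and F_t = σ(U, θ) for t ∈ ℕ, t ≥ 2. Define S′_t = (1_{{U > 1/2}} − 1_{{U < 1/2}}) · 1_{{t ≥ 1}} + (θ/U) · 1_{{t ≥ 2}} and Z_t = 1_{{t = 0}} + 2U · 1_{{t ≥ 1}}. Then S′ is a P–local martingale and a P–generalized martingale, but E_P[Z_1 S′_1] = 1/2 ≠ 0 = E_P[Z_0 S′_0]; hence the product process (Z_t S′_t)_{t∈ℕ₀} is not a P–martingale. -/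

import Mathlib

open MeasureTheory Filter Set ENNReal
open scoped Classical

noncomputable section

/-- Generalized conditional expectation `E[Y | G]` of a nonnegative random variable `Y`,
defined as the (a.s. monotone) limit `lim_k E[Y ∧ k | G]`, with values in `ℝ≥0∞`. -/
noncomputable def gce {Ω : Type*} {m0 : MeasurableSpace Ω} (G : MeasurableSpace Ω)
    (μ : @Measure Ω m0) (Y : Ω → ℝ) : Ω → ℝ≥0∞ :=
  fun ω => ⨆ k : ℕ, ENNReal.ofReal ((μ[fun ω' => min (Y ω') (k : ℝ)|G]) ω)

/-- Generalized conditional expectation `E[W | G] = E[W⁺ | G] - E[W⁻ | G]` of a real random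
variable `W` (meaningful when `E[|W| | G] < ∞` a.s.). -/
noncomputable def gcondexp {Ω : Type*} {m0 : MeasurableSpace Ω} (G : MeasurableSpace Ω)
    (μ : @Measure Ω m0) (W : Ω → ℝ) : Ω → ℝ :=
  fun ω => (@gce Ω m0 G μ (fun ω' => max (W ω') 0) ω).toReal
    - (@gce Ω m0 G μ (fun ω' => max (-(W ω')) 0) ω).toReal

/-- A (possibly infinite) stopping time for a discrete-time filtration. -/
def IsStoppingTimeE {Ω : Type*} [m0 : MeasurableSpace Ω] (ℱ : Filtration ℕ m0)
    (τ : Ω → ℕ∞) : Prop :=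
  ∀ n : ℕ, MeasurableSet[ℱ n] {ω | τ ω ≤ (n : ℕ∞)}

/-- The stopped process `S^τ 1_{τ > 0}`. -/
noncomputable def stoppedAt {Ω E : Type*} [Zero E] (S : ℕ → Ω → E) (τ : Ω → ℕ∞) :
    ℕ → Ω → E :=
  fun t ω => if 0 < τ ω then S ((min (t : ℕ∞) (τ ω)).toNat) ω else 0

/-- A discrete-time `d`-dimensional process `S` is a local martingale if it is adapted and
there exist stopping times `τ n → ∞` a.s. such that each stopped process
`S^{τ n} 1_{τ n > 0}` is a martingale. -/
def IsLocalMartingale {Ω E : Type*} [m0 : MeasurableSpace Ω]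
    [NormedAddCommGroup E] [NormedSpace ℝ E] [CompleteSpace E]
    (ℱ : Filtration ℕ m0) (μ : Measure Ω) (S : ℕ → Ω → E) : Prop :=
  StronglyAdapted ℱ S ∧ ∃ τ : ℕ → Ω → ℕ∞,
    (∀ n, IsStoppingTimeE ℱ (τ n)) ∧
    (∀ᵐ ω ∂μ, ∀ M : ℕ, ∀ᶠ n in atTop, (M : ℕ∞) ≤ τ n ω) ∧
    (∀ n, Martingale (stoppedAt S (τ n)) ℱ μ)

/-! `S'` is `0`, then the fair sign `ξ₁ = ±1` of `U - 1/2`, then `ξ₁ + θ/U` forever.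
Given `σ(U)`, the independent fair sign `θ` makes `S'₂` take the values `ξ₁ ± 1/U` with
probability `1/2` each, so its generalized conditional expectation is `ξ₁` although `1/U` is not
integrable. Stopping at time `1` on `{U ≤ 1/(n+1)}` makes the jump `θ/U` bounded, which turns
`S'` into a local martingale. Finally `E[Z₁ S'₁] = ∫₀¹ 2u sign(u - 1/2) du = 1/2`, whereas a
martingale has constant expectation. -/

open ProbabilityTheory

section GeneralizedConditionalExpectation

variable {Ω : Type*} {m0 : MeasurableSpace Ω} {μ : Measure Ω} {Y Y' X X' : Ω → ℝ}

lemma abs_min_natCast_le {a : ℝ} (ha : 0 ≤ a) (k : ℕ) : |min a k| ≤ k := by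
  rw [abs_of_nonneg (le_min ha k.cast_nonneg)]
  exact min_le_right _ _

lemma integrable_min_natCast [IsFiniteMeasure μ] (hY : AEStronglyMeasurable Y μ) (hY0 : 0 ≤ Y)
    (k : ℕ) : Integrable (fun ω => min (Y ω) k) μ :=
  .of_bound (hY.inf aestronglyMeasurable_const) k
    (ae_of_all _ fun ω => abs_min_natCast_le (hY0 ω) k)

variable {G : MeasurableSpace Ω}

def HasGCondExp (G : MeasurableSpace Ω) (μ : @Measure Ω m0) (Y X : Ω → ℝ) : Prop :=
  (∀ᵐ ω ∂μ, gce G μ (fun ω' => |Y ω'|) ω < ⊤) ∧ ∀ᵐ ω ∂μ, gcondexp G μ Y ω = X ω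

def IsGeneralizedMartingale (ℱ : Filtration ℕ m0) (μ : Measure Ω) (S : ℕ → Ω → ℝ) : Prop :=
  ∀ t, HasGCondExp (ℱ t) μ (S (t + 1)) (S t)

lemma gce_congr_ae (h : Y =ᵐ[μ] Y') : gce G μ Y =ᵐ[μ] gce G μ Y' := by
  have hk : ∀ k : ℕ, μ[fun ω => min (Y ω) k|G] =ᵐ[μ] μ[fun ω => min (Y' ω) k|G] := fun k =>
    condExp_congr_ae (h.mono fun ω hω => by simp only [hω])
  filter_upwards [ae_all_iff.2 hk] with ω hω
  simp only [gce, hω]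

lemma HasGCondExp.congr (h : HasGCondExp G μ Y X) (hY : Y =ᵐ[μ] Y') (hX : X =ᵐ[μ] X') :
    HasGCondExp G μ Y' X' := by
  have hpart : ∀ F : ℝ → ℝ, gce G μ (fun ω => F (Y ω)) =ᵐ[μ] gce G μ (fun ω => F (Y' ω)) :=
    fun F => gce_congr_ae (hY.mono fun ω hω => by simp only [hω])
  refine ⟨?_, ?_⟩
  · filter_upwards [h.1, hpart (|·|)] with ω hω hω'
    rwa [← hω']
  · filter_upwards [h.2, hX, hpart (max · 0), hpart (fun y => max (-y) 0)] with ω hω hXω h₁ h₂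
    simp only [gcondexp] at hω ⊢
    rw [← h₁, ← h₂, hω, hXω]

lemma gce_ae_eq_ofReal {φ : ℕ → Ω → ℝ} {c : Ω → ℝ}
    (hφ : ∀ k : ℕ, μ[fun ω => min (Y ω) k|G] =ᵐ[μ] φ k) (hle : ∀ k ω, φ k ω ≤ c ω)
    (hc : ∀ ω, ∃ k, φ k ω = c ω) :
    gce G μ Y =ᵐ[μ] fun ω => ENNReal.ofReal (c ω) := by
  filter_upwards [ae_all_iff.2 hφ] with ω hω
  simp only [gce, hω]
  obtain ⟨k, hk⟩ := hc ω
  exact le_antisymm (iSup_le fun k => ofReal_le_ofReal (hle k ω))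
    (le_iSup_of_le k (ofReal_le_ofReal hk.ge))

lemma hasGCondExp_of_gce {a b : Ω → ℝ} (habs : ∀ᵐ ω ∂μ, gce G μ (fun ω' => |Y ω'|) ω < ⊤)
    (hpos : gce G μ (fun ω => max (Y ω) 0) =ᵐ[μ] fun ω => ENNReal.ofReal (a ω))
    (hneg : gce G μ (fun ω => max (-Y ω) 0) =ᵐ[μ] fun ω => ENNReal.ofReal (b ω))
    (ha : 0 ≤ a) (hb : 0 ≤ b) : HasGCondExp G μ Y (a - b) := by
  refine ⟨habs, ?_⟩
  filter_upwards [hpos, hneg] with ω hω₁ hω₂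
  simp only [gcondexp, hω₁, hω₂, toReal_ofReal (ha ω), toReal_ofReal (hb ω), Pi.sub_apply]

section Measurable

variable [IsFiniteMeasure μ]

lemma gce_of_measurable (hG : G ≤ m0) (hY : Measurable[G] Y) (hY0 : 0 ≤ Y) :
    gce G μ Y =ᵐ[μ] fun ω => ENNReal.ofReal (Y ω) := by
  refine gce_ae_eq_ofReal (φ := fun k ω => min (Y ω) k) (fun k => ?_)
    (fun k ω => min_le_left _ _) fun ω => ?_
  · refine (condExp_of_stronglyMeasurable hG ?_ ?_).eventuallyEq
    · exact (hY.min measurable_const).stronglyMeasurable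
    · exact integrable_min_natCast (hY.mono hG le_rfl).aestronglyMeasurable hY0 k
  · obtain ⟨k, hk⟩ := exists_nat_ge (Y ω)
    exact ⟨k, min_eq_left hk⟩

lemma hasGCondExp_self_of_measurable (hG : G ≤ m0) (hY : Measurable[G] Y) :
    HasGCondExp G μ Y Y := by
  have hcomp : ∀ F : ℝ → ℝ, Measurable F → (∀ y, 0 ≤ F y) →
      gce G μ (fun ω => F (Y ω)) =ᵐ[μ] fun ω => ENNReal.ofReal (F (Y ω)) :=
    fun F hF hF0 => gce_of_measurable hG (hF.comp hY) fun _ => hF0 _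
  have h := hasGCondExp_of_gce (μ := μ) (G := G) (Y := Y)
    ((hcomp (|·|) measurable_abs abs_nonneg).mono fun ω hω => hω ▸ ofReal_lt_top)
    (hcomp (max · 0) (measurable_id.max measurable_const) fun _ => le_max_right _ _)
    (hcomp (fun y => max (-y) 0) (measurable_neg.max measurable_const) fun _ => le_max_right _ _)
    (fun _ => le_max_right _ _) fun _ => le_max_right _ _
  exact h.congr (ae_of_all _ fun _ => rfl)
    (ae_of_all _ fun _ => max_zero_sub_max_neg_zero_eq_self _)

end Measurable

end GeneralizedConditionalExpectation

section Independence

open MeasurableSpace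

variable {Ω : Type*} {m₁ G m0 : MeasurableSpace Ω} {μ : Measure Ω} [IsFiniteMeasure μ]
  {E : Set Ω} {A B : Ω → ℝ}

lemma condExp_mul_eq_mul_integral_of_indep (hm₁ : m₁ ≤ m0) (hG : G ≤ m0)
    (hind : Indep m₁ G μ) {f X : Ω → ℝ} (hf : StronglyMeasurable[G] f) {C : ℝ}
    (hfC : ∀ ω, |f ω| ≤ C) (hX : StronglyMeasurable[m₁] X) (hXi : Integrable X μ) :
    μ[f * X|G] =ᵐ[μ] fun ω => f ω * ∫ ω', X ω' ∂μ := by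
  filter_upwards [condExp_stronglyMeasurable_mul_of_bound hG hf hXi C (ae_of_all _ hfC),
    condExp_indep_eq hm₁ hG hX hind] with ω h₁ h₂
  rw [h₁, Pi.mul_apply, h₂]

lemma condExp_piecewise_of_indep (hG : G ≤ m0) (hE : MeasurableSet E)
    (hind : Indep (generateFrom {E}) G μ) (hA : Measurable[G] A) (hB : Measurable[G] B) {C : ℝ}
    (hAC : ∀ ω, |A ω| ≤ C) (hBC : ∀ ω, |B ω| ≤ C) :
    μ[E.piecewise A B|G] =ᵐ[μ] fun ω => μ.real E * A ω + μ.real Eᶜ * B ω := by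
  have hE₁ : MeasurableSet[generateFrom {E}] E := measurableSet_generateFrom rfl
  have hgen : generateFrom {E} ≤ m0 := generateFrom_le fun _ h => h ▸ hE
  have hmul : ∀ F, MeasurableSet[generateFrom {E}] F → ∀ f, Measurable[G] f →
      (∀ ω, |f ω| ≤ C) → μ[f * F.indicator 1|G] =ᵐ[μ] fun ω => f ω * μ.real F := by
    intro F hF f hf hfC
    rw [← integral_indicator_one (hgen _ hF)]
    exact condExp_mul_eq_mul_integral_of_indep hgen hG hind hf.stronglyMeasurable hfC
      (stronglyMeasurable_one.indicator hF) ((integrable_const 1).indicator (hgen _ hF))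
  have hint : ∀ F, MeasurableSet F → ∀ f, Measurable[G] f → (∀ ω, |f ω| ≤ C) →
      Integrable (f * F.indicator 1) μ := fun F hF f hf hfC =>
    ((integrable_const 1).indicator hF).bdd_mul (hf.mono hG le_rfl).aestronglyMeasurable
      (ae_of_all _ hfC)
  have hsplit : E.piecewise A B = A * E.indicator 1 + B * Eᶜ.indicator 1 := by
    ext ω
    by_cases hω : ω ∈ E <;> simp [hω]
  rw [hsplit]
  filter_upwards [condExp_add (hint E hE A hA hAC) (hint Eᶜ hE.compl B hB hBC) G,
    hmul E hE₁ A hA hAC, hmul Eᶜ hE₁.compl B hB hBC] with ω h h₁ h₂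
  rw [h, Pi.add_apply, h₁, h₂]
  ring

lemma gce_piecewise_of_indep (hG : G ≤ m0) (hE : MeasurableSet E)
    (hind : Indep (generateFrom {E}) G μ) (hA : Measurable[G] A) (hB : Measurable[G] B)
    (hA0 : 0 ≤ A) (hB0 : 0 ≤ B) :
    gce G μ (E.piecewise A B) =ᵐ[μ]
      fun ω => ENNReal.ofReal (μ.real E * A ω + μ.real Eᶜ * B ω) := by
  refine gce_ae_eq_ofReal (φ := fun k ω => μ.real E * min (A ω) k + μ.real Eᶜ * min (B ω) k)
    (fun k => ?_) (fun k ω => ?_) fun ω => ?_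
  · have htrunc : (fun ω => min (E.piecewise A B ω) k) =
        E.piecewise (fun ω => min (A ω) k) (fun ω => min (B ω) k) :=
      funext fun ω => Set.apply_piecewise E A B fun _ y => min y (k : ℝ)
    rw [htrunc]
    exact condExp_piecewise_of_indep hG hE hind (hA.min measurable_const)
      (hB.min measurable_const) (fun ω => abs_min_natCast_le (hA0 ω) k)
      fun ω => abs_min_natCast_le (hB0 ω) k
  · gcongr <;> exact min_le_left _ _
  · obtain ⟨k, hk⟩ := exists_nat_ge (max (A ω) (B ω))
    refine ⟨k, ?_⟩
    simp only [min_eq_left ((le_max_left _ _).trans hk), min_eq_left ((le_max_right _ _).trans hk)]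

lemma hasGCondExp_piecewise_of_indep (hG : G ≤ m0) (hE : MeasurableSet E)
    (hind : Indep (generateFrom {E}) G μ) (hA : Measurable[G] A) (hB : Measurable[G] B) :
    HasGCondExp G μ (E.piecewise A B) fun ω => μ.real E * A ω + μ.real Eᶜ * B ω := by
  have hcomp : ∀ F : ℝ → ℝ, Measurable F → (∀ y, 0 ≤ F y) →
      gce G μ (fun ω => F (E.piecewise A B ω)) =ᵐ[μ]
        fun ω => ENNReal.ofReal (μ.real E * F (A ω) + μ.real Eᶜ * F (B ω)) := by
    intro F hF hF0
    have h : (fun ω => F (E.piecewise A B ω)) = E.piecewise (F ∘ A) (F ∘ B) :=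
      funext fun ω => Set.apply_piecewise E A B fun _ => F
    rw [h]
    exact gce_piecewise_of_indep hG hE hind (hF.comp hA) (hF.comp hB) (fun ω => hF0 _)
      fun ω => hF0 _
  have habs := hcomp (|·|) measurable_abs abs_nonneg
  have h := hasGCondExp_of_gce (μ := μ) (G := G) (Y := E.piecewise A B)
    (habs.mono fun ω hω => hω ▸ ofReal_lt_top)
    (hcomp (max · 0) (measurable_id.max measurable_const) fun _ => le_max_right _ _)
    (hcomp (fun y => max (-y) 0) (measurable_neg.max measurable_const) fun _ => le_max_right _ _)
    (fun ω => by positivity) fun ω => by positivity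
  refine h.congr (ae_of_all _ fun _ => rfl) (ae_of_all _ fun ω => ?_)
  simp only [Pi.sub_apply]
  linear_combination μ.real E * max_zero_sub_max_neg_zero_eq_self (A ω) +
    μ.real Eᶜ * max_zero_sub_max_neg_zero_eq_self (B ω)

lemma hasGCondExp_piecewise_of_indep_of_half [IsProbabilityMeasure μ] (hG : G ≤ m0)
    (hE : MeasurableSet E) (hind : Indep (generateFrom {E}) G μ)
    (hμE : μ.real E = 1 / 2) (hA : Measurable[G] A) (hB : Measurable[G] B) :
    HasGCondExp G μ (E.piecewise A B) fun ω => (A ω + B ω) / 2 := by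
  refine (hasGCondExp_piecewise_of_indep hG hE hind hA hB).congr (ae_of_all _ fun _ => rfl)
    (ae_of_all _ fun ω => ?_)
  rw [probReal_compl_eq_one_sub hE, hμE]
  ring

end Independence

section TwoStepProcess

variable {Ω : Type*} {m0 : MeasurableSpace Ω} {μ : Measure Ω} {ℱ : Filtration ℕ m0}
  {ξ₁ ξ₂ : Ω → ℝ}

def twoStepProcess (ξ₁ ξ₂ : Ω → ℝ) (t : ℕ) (ω : Ω) : ℝ :=
  (if 1 ≤ t then ξ₁ ω else 0) + (if 2 ≤ t then ξ₂ ω else 0)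

@[simp]
lemma twoStepProcess_zero : twoStepProcess ξ₁ ξ₂ 0 = 0 := by
  ext ω
  simp [twoStepProcess]

@[simp]
lemma twoStepProcess_one : twoStepProcess ξ₁ ξ₂ 1 = ξ₁ := by
  ext ω
  simp [twoStepProcess]

lemma twoStepProcess_of_two_le {t : ℕ} (ht : 2 ≤ t) : twoStepProcess ξ₁ ξ₂ t = ξ₁ + ξ₂ := by
  ext ω
  simp [twoStepProcess, ht, one_le_two.trans ht]

lemma measurable_twoStepProcess (h₁ : Measurable[ℱ 1] ξ₁) (h₂ : Measurable[ℱ 2] ξ₂) (t : ℕ) :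
    Measurable[ℱ t] (twoStepProcess ξ₁ ξ₂ t) := by
  match t with
  | 0 => rw [twoStepProcess_zero]; exact measurable_const
  | 1 => simpa using h₁
  | t + 2 =>
    rw [twoStepProcess_of_two_le (by omega)]
    exact (h₁.mono (ℱ.mono (by omega)) le_rfl).add (h₂.mono (ℱ.mono (by omega)) le_rfl)

lemma martingale_twoStepProcess [IsFiniteMeasure μ] (h₁ : Measurable[ℱ 1] ξ₁)
    (h₂ : Measurable[ℱ 2] ξ₂) (hi₁ : Integrable ξ₁ μ) (hi₂ : Integrable ξ₂ μ)
    (hc₁ : μ[ξ₁|ℱ 0] =ᵐ[μ] 0) (hc₂ : μ[ξ₂|ℱ 1] =ᵐ[μ] 0) :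
    Martingale (twoStepProcess ξ₁ ξ₂) ℱ μ := by
  have hadapted : StronglyAdapted ℱ (twoStepProcess ξ₁ ξ₂) := fun t =>
    (measurable_twoStepProcess h₁ h₂ t).stronglyMeasurable
  have hint : ∀ t, Integrable (twoStepProcess ξ₁ ξ₂ t) μ
    | 0 => by simp
    | 1 => by simpa using hi₁
    | t + 2 => by simpa [twoStepProcess_of_two_le] using hi₁.add hi₂
  refine martingale_nat hadapted hint fun t => ?_
  match t with
  | 0 => simpa using hc₁.symm
  | 1 =>
    rw [twoStepProcess_of_two_le le_rfl, twoStepProcess_one]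
    filter_upwards [condExp_add hi₁ hi₂ (ℱ 1), hc₂] with ω h h₂
    rw [h, Pi.add_apply, h₂, condExp_of_stronglyMeasurable (ℱ.le 1) h₁.stronglyMeasurable hi₁]
    simp
  | t + 2 =>
    rw [twoStepProcess_of_two_le (t := t + 2 + 1) (by omega), ← twoStepProcess_of_two_le
      (t := t + 2) (by omega), condExp_of_stronglyMeasurable (ℱ.le _) (hadapted _) (hint _)]

lemma isGeneralizedMartingale_twoStepProcess [IsFiniteMeasure μ] (h₁ : Measurable[ℱ 1] ξ₁)
    (h₂ : Measurable[ℱ 2] ξ₂) (hg₀ : HasGCondExp (ℱ 0) μ ξ₁ 0)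
    (hg₁ : HasGCondExp (ℱ 1) μ (ξ₁ + ξ₂) ξ₁) :
    IsGeneralizedMartingale ℱ μ (twoStepProcess ξ₁ ξ₂) := fun t =>
  match t with
  | 0 => by simpa using hg₀
  | 1 => by simpa [twoStepProcess_of_two_le] using hg₁
  | t + 2 => by
    rw [twoStepProcess_of_two_le (t := t + 2 + 1) (by omega), ← twoStepProcess_of_two_le
      (t := t + 2) (by omega)]
    exact hasGCondExp_self_of_measurable (ℱ.le _) (measurable_twoStepProcess h₁ h₂ _)

lemma stoppedAt_twoStepProcess (A : Set Ω) :
    stoppedAt (twoStepProcess ξ₁ ξ₂) (fun ω => if ω ∈ A then ⊤ else 1) =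
      twoStepProcess ξ₁ (A.indicator ξ₂) := by
  ext t ω
  by_cases hω : ω ∈ A
  · simp [stoppedAt, hω, twoStepProcess]
  · rcases Nat.lt_or_ge t 1 with ht | ht
    · obtain rfl : t = 0 := by omega
      simp [stoppedAt, hω, twoStepProcess]
    · simp [stoppedAt, hω, twoStepProcess, ht]

lemma isStoppingTimeE_ite_top_one {A : Set Ω} (hA : MeasurableSet[ℱ 1] A) :
    IsStoppingTimeE ℱ fun ω => if ω ∈ A then ⊤ else 1 := by
  rintro (_ | n)
  · convert @MeasurableSet.empty _ (ℱ 0)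
    ext ω
    by_cases hω : ω ∈ A <;> simp [hω]
  · have h : {ω | (if ω ∈ A then ⊤ else 1 : ℕ∞) ≤ (n + 1 : ℕ)} = Aᶜ := by
      ext ω
      by_cases hω : ω ∈ A <;> simp [hω]
    rw [h]
    exact ℱ.mono (by omega) _ hA.compl

end TwoStepProcess

lemma isLocalMartingale_twoStepProcess_div {Ω : Type*} {m0 : MeasurableSpace Ω} {μ : Measure Ω}
    [IsFiniteMeasure μ] {ℱ : Filtration ℕ m0} {ξ₁ U θ : Ω → ℝ} (hξ₁ : Measurable[ℱ 1] ξ₁)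
    (hi₁ : Integrable ξ₁ μ) (hc₁ : μ[ξ₁|ℱ 0] =ᵐ[μ] 0) (hU : Measurable[ℱ 1] U)
    (hUpos : ∀ᵐ ω ∂μ, 0 < U ω) (hθ : Measurable[ℱ 2] θ) (hθi : Integrable θ μ)
    (hθ0 : ∫ ω, θ ω ∂μ = 0) (hind : Indep (MeasurableSpace.comap θ inferInstance) (ℱ 1) μ) :
    IsLocalMartingale ℱ μ (twoStepProcess ξ₁ fun ω => θ ω / U ω) := by
  set A : ℕ → Set Ω := fun n => {ω | ((n : ℝ) + 1)⁻¹ < U ω}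
  have hU₂ : Measurable[ℱ 2] U := hU.mono (ℱ.mono one_le_two) le_rfl
  refine ⟨fun t => (measurable_twoStepProcess hξ₁ (hθ.div hU₂) t).stronglyMeasurable,
    fun n ω => if ω ∈ A n then ⊤ else 1,
    fun n => isStoppingTimeE_ite_top_one (hU measurableSet_Ioi), ?_, fun n => ?_⟩
  · filter_upwards [hUpos] with ω hω M
    obtain ⟨N, hN⟩ := exists_nat_one_div_lt hω
    filter_upwards [eventually_ge_atTop N] with n hn
    have hnN : ((n : ℝ) + 1)⁻¹ ≤ ((N : ℝ) + 1)⁻¹ := by gcongr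
    have hωn : ω ∈ A n := show ((n : ℝ) + 1)⁻¹ < U ω by
      rw [one_div] at hN
      linarith
    simp [hωn]
  · set h : Ω → ℝ := (A n).indicator fun ω => (U ω)⁻¹
    have hh : Measurable[ℱ 1] h := (hU.inv).indicator (hU measurableSet_Ioi)
    have hhC : ∀ ω, |h ω| ≤ n + 1 := by
      intro ω
      by_cases hω : ω ∈ A n
      · have hlt : ((n : ℝ) + 1)⁻¹ < U ω := hω
        rw [show h ω = (U ω)⁻¹ from indicator_of_mem hω _,
          abs_of_pos (inv_pos.2 (lt_trans (by positivity) hlt))]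
        exact (inv_lt_of_inv_lt₀ (by positivity) hlt).le
      · simp only [h, indicator_of_notMem hω, abs_zero]
        positivity
    have hjump : (A n).indicator (fun ω => θ ω / U ω) = h * θ := by
      ext ω
      by_cases hω : ω ∈ A n <;> simp [h, hω, div_eq_inv_mul]
    rw [stoppedAt_twoStepProcess, hjump]
    refine martingale_twoStepProcess hξ₁ ((hh.mono (ℱ.mono one_le_two) le_rfl).mul hθ) hi₁
      (hθi.bdd_mul (hh.mono (ℱ.le 1) le_rfl).aestronglyMeasurable (ae_of_all _ hhC)) hc₁ ?_
    filter_upwards [condExp_mul_eq_mul_integral_of_indep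
      (hθ.mono (ℱ.le 2) le_rfl).comap_le (ℱ.le 1) hind hh.stronglyMeasurable hhC
      (comap_measurable θ).stronglyMeasurable hθi] with ω hω
    simp [hω, hθ0]

lemma setIntegral_Icc_mul_ite_sub_ite {f : ℝ → ℝ} {a b c : ℝ} (hac : a ≤ c) (hcb : c ≤ b)
    (hf : IntegrableOn f (Icc a b)) :
    ∫ u in Icc a b, f u * ((if c < u then 1 else 0) - (if u < c then 1 else 0)) =
      (∫ u in c..b, f u) - ∫ u in a..c, f u := by
  have hsplit : (fun u => f u * ((if c < u then 1 else 0) - (if u < c then 1 else 0))) =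
      fun u => (Ioi c).indicator f u - (Iio c).indicator f u := by
    ext u
    by_cases h₁ : c < u <;> by_cases h₂ : u < c <;> simp [h₁, h₂, indicator]
  have hIoc : Icc a b ∩ Ioi c = Ioc c b := by
    ext u
    simp only [mem_inter_iff, mem_Icc, mem_Ioi, mem_Ioc]
    grind
  have hIco : Icc a b ∩ Iio c = Ico a c := by
    ext u
    simp only [mem_inter_iff, mem_Icc, mem_Iio, mem_Ico]
    grind
  rw [hsplit, integral_sub (hf.indicator measurableSet_Ioi) (hf.indicator measurableSet_Iio),
    setIntegral_indicator measurableSet_Ioi, setIntegral_indicator measurableSet_Iio, hIoc, hIco,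
    intervalIntegral.integral_of_le hcb, intervalIntegral.integral_of_le hac,
    integral_Ico_eq_integral_Ioo, integral_Ioc_eq_integral_Ioo (x := a)]

section FairSign

variable {Ω : Type*} {m0 : MeasurableSpace Ω} {μ : Measure Ω} {E : Set Ω} {X : Ω → ℝ}

def IsFairSign (μ : Measure Ω) (E : Set Ω) (X : Ω → ℝ) : Prop :=
  MeasurableSet E ∧ μ.real E = 1 / 2 ∧ X =ᵐ[μ] E.piecewise 1 (-1)

lemma IsFairSign.integrable [IsFiniteMeasure μ] (hX : IsFairSign μ E X) : Integrable X μ :=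
  (Integrable.piecewise hX.1 (integrable_const (1 : ℝ)).integrableOn
    (integrable_const (-1 : ℝ)).integrableOn).congr hX.2.2.symm

lemma IsFairSign.integral_eq_zero [IsProbabilityMeasure μ] (hX : IsFairSign μ E X) :
    ∫ ω, X ω ∂μ = 0 := by
  obtain ⟨hE, hμE, hXE⟩ := hX
  rw [integral_congr_ae hXE, integral_piecewise (f := 1) (g := -1) hE
    (integrable_const (1 : ℝ)).integrableOn (integrable_const (-1 : ℝ)).integrableOn]
  simp only [Pi.one_apply, Pi.neg_apply, setIntegral_const, smul_eq_mul,
    probReal_compl_eq_one_sub hE, hμE]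
  norm_num

lemma IsFairSign.hasGCondExp_bot [IsProbabilityMeasure μ] (hX : IsFairSign μ E X) :
    HasGCondExp ⊥ μ X 0 := by
  refine (hasGCondExp_piecewise_of_indep_of_half bot_le hX.1 (indep_bot_right _) hX.2.1
    (A := 1) (B := -1) measurable_const measurable_const.neg).congr hX.2.2.symm
    (ae_of_all _ fun ω => ?_)
  simp

lemma IsFairSign.hasGCondExp_add_div [IsProbabilityMeasure μ] {G : MeasurableSpace Ω}
    {θ ξ U : Ω → ℝ} (hθ : IsFairSign μ E θ) (hG : G ≤ m0)
    (hind : Indep (MeasurableSpace.generateFrom {E}) G μ) (hξ : Measurable[G] ξ)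
    (hU : Measurable[G] U) :
    HasGCondExp G μ (ξ + fun ω => θ ω / U ω) ξ := by
  refine (hasGCondExp_piecewise_of_indep_of_half hG hθ.1 hind hθ.2.1 (hξ.add hU.inv)
    (hξ.sub hU.inv)).congr (hθ.2.2.mono fun ω hω => ?_) (ae_of_all _ fun ω => ?_)
  · by_cases h : ω ∈ E
    · rw [piecewise_eq_of_mem _ _ _ h] at hω ⊢
      simp [hω, div_eq_mul_inv]
    · rw [piecewise_eq_of_notMem _ _ _ h] at hω ⊢
      simp [hω, div_eq_mul_inv, sub_eq_add_neg]
  · simp only [Pi.add_apply, Pi.sub_apply]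
    ring

lemma isFairSign_of_measure_eq_half [IsProbabilityMeasure μ] {θ : Ω → ℝ} (hθ : Measurable θ)
    (hθm : μ {ω | θ ω = -1} = 1 / 2) (hθp : μ {ω | θ ω = 1} = 1 / 2) :
    IsFairSign μ {ω | θ ω = 1} θ := by
  have hm : MeasurableSet {ω | θ ω = -1} := hθ (measurableSet_singleton _)
  have hp : MeasurableSet {ω | θ ω = 1} := hθ (measurableSet_singleton _)
  refine ⟨hp, by simp [measureReal_def, hθp], ?_⟩
  have hdisj : Disjoint {ω | θ ω = 1} {ω | θ ω = -1} := by
    refine disjoint_left.2 fun ω h₁ h₂ => ?_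
    have : (1 : ℝ) = -1 := h₁.symm.trans h₂
    norm_num at this
  have hnull : μ ({ω | θ ω = 1} ∪ {ω | θ ω = -1})ᶜ = 0 := by
    rw [prob_compl_eq_zero_iff (hp.union hm), measure_union hdisj hm, hθp, hθm,
      ENNReal.add_halves]
  have hpm : ∀ᵐ ω ∂μ, ω ∈ {ω | θ ω = 1} ∪ {ω | θ ω = -1} := ae_iff.2 hnull
  filter_upwards [hpm] with ω hω
  rcases hω with h | h <;> simp [Set.piecewise, show θ ω = _ from h]

end FairSign

section Uniform

variable {Ω : Type*} {m0 : MeasurableSpace Ω} {P : Measure Ω} {U : Ω → ℝ}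

lemma ae_ne_of_map_eq_uniform (hU : Measurable U)
    (hUlaw : P.map U = volume.restrict (Icc (0 : ℝ) 1)) (a : ℝ) : ∀ᵐ ω ∂P, U ω ≠ a :=
  ae_of_ae_map hU.aemeasurable (by rw [hUlaw]; exact Measure.ae_ne _ a)

lemma ae_pos_of_map_eq_uniform (hU : Measurable U)
    (hUlaw : P.map U = volume.restrict (Icc (0 : ℝ) 1)) : ∀ᵐ ω ∂P, 0 < U ω := by
  have hIcc : ∀ᵐ u ∂P.map U, u ∈ Icc 0 1 := by
    rw [hUlaw]
    exact ae_restrict_mem measurableSet_Icc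
  filter_upwards [ae_of_ae_map hU.aemeasurable hIcc, ae_ne_of_map_eq_uniform hU hUlaw 0]
    with ω h₁ h₀
  exact h₁.1.lt_of_ne h₀.symm

lemma measureReal_lt_of_map_eq_uniform (hU : Measurable U)
    (hUlaw : P.map U = volume.restrict (Icc (0 : ℝ) 1)) {c : ℝ} (hc₀ : 0 ≤ c) (hc₁ : c ≤ 1) :
    P.real {ω | c < U ω} = 1 - c := by
  have hIoc : Ioi c ∩ Icc 0 1 = Ioc c 1 := by
    ext u
    simp only [mem_inter_iff, mem_Ioi, mem_Icc, mem_Ioc]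
    grind
  rw [show {ω | c < U ω} = U ⁻¹' Ioi c from rfl, ← map_measureReal_apply hU measurableSet_Ioi,
    hUlaw, measureReal_restrict_apply measurableSet_Ioi, hIoc, Real.volume_real_Ioc,
    max_eq_left (by linarith)]

lemma isFairSign_of_map_eq_uniform (hU : Measurable U)
    (hUlaw : P.map U = volume.restrict (Icc (0 : ℝ) 1)) :
    IsFairSign P {ω | 1 / 2 < U ω}
      fun ω => (if 1 / 2 < U ω then (1 : ℝ) else 0) - (if U ω < 1 / 2 then 1 else 0) := by
  refine ⟨hU measurableSet_Ioi, ?_, ?_⟩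
  · rw [measureReal_lt_of_map_eq_uniform hU hUlaw (by norm_num) (by norm_num)]
    norm_num
  filter_upwards [ae_ne_of_map_eq_uniform hU hUlaw (1 / 2)] with ω hω
  by_cases h : 1 / 2 < U ω
  · simp only [Set.piecewise, mem_ofPred_eq, h, not_lt.2 h.le, if_true, if_false]
    norm_num
  · simp only [Set.piecewise, mem_ofPred_eq, h, lt_of_le_of_ne (not_lt.1 h) hω, if_true,
      if_false]
    norm_num

lemma integral_two_mul_ite_sub_ite_of_map_eq_uniform (hU : Measurable U)
    (hUlaw : P.map U = volume.restrict (Icc (0 : ℝ) 1)) :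
    ∫ ω, 2 * U ω * ((if 1 / 2 < U ω then (1 : ℝ) else 0) - (if U ω < 1 / 2 then 1 else 0)) ∂P =
      1 / 2 := by
  have hg : Measurable fun u : ℝ =>
      2 * u * ((if 1 / 2 < u then (1 : ℝ) else 0) - (if u < 1 / 2 then 1 else 0)) :=
    (measurable_const.mul measurable_id).mul
      ((measurable_const.ite measurableSet_Ioi measurable_const).sub
        (measurable_const.ite measurableSet_Iio measurable_const))
  rw [← integral_map hU.aemeasurable hg.aestronglyMeasurable, hUlaw,
    setIntegral_Icc_mul_ite_sub_ite (f := fun u => 2 * u) (by norm_num) (by norm_num)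
      (Continuous.integrableOn_Icc (by fun_prop)),
    intervalIntegral.integral_const_mul 2 fun u => u,
    intervalIntegral.integral_const_mul 2 fun u => u, integral_id, integral_id]
  norm_num

end Uniform

/-- **Example (continued).** With the same setup,
`S'_t = (1_{U > 1/2} - 1_{U < 1/2}) 1_{t ≥ 1} + (θ/U) 1_{t ≥ 2}` and
`Z_t = 1_{t = 0} + 2U 1_{t ≥ 1}`: `S'` is a local martingale and a generalized martingale,
but `E[Z_1 S'_1] = 1/2 ≠ 0 = E[Z_0 S'_0]`, hence `Z S'` is not a martingale. -/
theorem stmt17 {Ω : Type*} {m0 : MeasurableSpace Ω} (P : Measure Ω) [IsProbabilityMeasure P]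
    (U θ : Ω → ℝ) (hU : Measurable U) (hθ : Measurable θ)
    (hindep : ProbabilityTheory.IndepFun U θ P)
    (hUlaw : P.map U = MeasureTheory.volume.restrict (Set.Icc (0 : ℝ) 1))
    (hθm : P {ω | θ ω = -1} = 1 / 2) (hθp : P {ω | θ ω = 1} = 1 / 2)
    (ℱ : Filtration ℕ m0)
    (hF0 : (ℱ 0 : MeasurableSpace Ω) = ⊥)
    (hF1 : (ℱ 1 : MeasurableSpace Ω) = MeasurableSpace.comap U Real.measurableSpace)
    (hFt : ∀ t, 2 ≤ t → (ℱ t : MeasurableSpace Ω) =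
      MeasurableSpace.comap U Real.measurableSpace ⊔
        MeasurableSpace.comap θ Real.measurableSpace)
    (S' : ℕ → Ω → ℝ)
    (hS'def : ∀ t ω, S' t ω =
      (if 1 ≤ t then
        ((if 1 / 2 < U ω then (1 : ℝ) else 0) - (if U ω < 1 / 2 then 1 else 0)) else 0) +
      (if 2 ≤ t then θ ω / U ω else 0))
    (Z : ℕ → Ω → ℝ) (hZdef : ∀ t ω, Z t ω = if t = 0 then 1 else 2 * U ω) :
    IsLocalMartingale ℱ P S' ∧
    (∀ t : ℕ,
      (∀ᵐ ω ∂P, gce (ℱ t) P (fun ω' => |S' (t + 1) ω'|) ω < ⊤) ∧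
      (∀ᵐ ω ∂P, gcondexp (ℱ t) P (S' (t + 1)) ω = S' t ω)) ∧
    (∫ ω, Z 1 ω * S' 1 ω ∂P = 1 / 2) ∧
    (∫ ω, Z 0 ω * S' 0 ω ∂P = 0) ∧
    ¬ Martingale (fun t ω => Z t ω * S' t ω) ℱ P := by
  set ξ₁ : Ω → ℝ := fun ω => (if 1 / 2 < U ω then (1 : ℝ) else 0) - (if U ω < 1 / 2 then 1 else 0)
  obtain rfl : S' = twoStepProcess ξ₁ fun ω => θ ω / U ω := by
    ext t ω
    exact hS'def t ω
  have hU₁ : Measurable[ℱ 1] U := hF1 ▸ comap_measurable U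
  have hθ₂ : Measurable[ℱ 2] θ := hFt 2 le_rfl ▸ (comap_measurable θ).mono le_sup_right le_rfl
  have hξ₁ : Measurable[ℱ 1] ξ₁ :=
    (measurable_const.ite (hU₁ measurableSet_Ioi) measurable_const).sub
      (measurable_const.ite (hU₁ measurableSet_Iio) measurable_const)
  have hξ₁sign := isFairSign_of_map_eq_uniform hU hUlaw
  have hθsign := isFairSign_of_measure_eq_half hθ hθm hθp
  have hind : Indep (MeasurableSpace.comap θ inferInstance) (ℱ 1) P :=
    hF1 ▸ ((IndepFun_iff_Indep U θ P).1 hindep).symm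
  have hZS₀ : ∫ ω, Z 0 ω * twoStepProcess ξ₁ (fun ω => θ ω / U ω) 0 ω ∂P = 0 := by simp
  have hZS₁ : ∫ ω, Z 1 ω * twoStepProcess ξ₁ (fun ω => θ ω / U ω) 1 ω ∂P = 1 / 2 := by
    simp only [hZdef, twoStepProcess_one, one_ne_zero, if_false]
    exact integral_two_mul_ite_sub_ite_of_map_eq_uniform hU hUlaw
  refine ⟨?_, ?_, hZS₁, hZS₀, fun hM => ?_⟩
  · refine isLocalMartingale_twoStepProcess_div hξ₁ hξ₁sign.integrable ?_ hU₁
      (ae_pos_of_map_eq_uniform hU hUlaw) hθ₂ hθsign.integrable hθsign.integral_eq_zero hind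
    rw [hF0, condExp_bot, hξ₁sign.integral_eq_zero]
    rfl
  · refine isGeneralizedMartingale_twoStepProcess hξ₁
      (hθ₂.div (hU₁.mono (ℱ.mono one_le_two) le_rfl)) (hF0 ▸ hξ₁sign.hasGCondExp_bot)
      (hθsign.hasGCondExp_add_div (ℱ.le 1) ?_ hξ₁ hU₁)
    exact indep_of_indep_of_le_left hind
      (MeasurableSpace.generateFrom_le fun s hs => hs ▸ ⟨{1}, measurableSet_singleton 1, rfl⟩)
  · have h := hM.setIntegral_eq zero_le_one MeasurableSet.univ
    simp only [setIntegral_univ, hZS₀, hZS₁] at h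
    norm_num at h
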